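/- Let m = [v_i; p_i] be an N-optimal presentation of m ∈ Z^d with |r(m)| > C N^{τ_1} and p_1 < C N^{4dτ_0}, where τ_1 = (4d)^{d+1}(τ_0+1) and C N^{4dτ_0} ≤ c N^{τ_1/(4d)}. Then there exists ℓ with 0 < ℓ < d such that m belongs to the good portion [v_i; p_i]_ℓ^g of the codimension-ℓ subspace [v_i; p_i]_ℓ; in particular p_ℓ ≤ c N^{τ_1/(4d)} and |(v, m)| ≥ C max(N^{4dτ_0}, c^{-4d} p_ℓ^{4d}) for all v ∈ B_N \ ⟨v_1,...,v_ℓ⟩. -/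

import Mathlib

/-- Integer inner product on `ℤ^d`. -/
def dotZ {d : ℕ} (v x : Fin d → ℤ) : ℤ := ∑ i, v i * x i

/-- Euclidean norm of an integer vector. -/
noncomputable def enormZ {d : ℕ} (v : Fin d → ℤ) : ℝ :=
  Real.sqrt (∑ i, ((v i : ℝ)) ^ 2)

/-- `v ∈ B_N`: nonzero integer vector of Euclidean norm `< κN`. -/
def inBall (d : ℕ) (κ N : ℝ) (v : Fin d → ℤ) : Prop :=
  v ≠ 0 ∧ enormZ v < κ * N

/-- Lexicographic strict order on integer tuples. -/
def lexLt {ι : Type*} [LT ι] (x y : ι → ℤ) : Prop :=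
  ∃ i, (∀ j, j < i → x j = y j) ∧ x i < y i

/-- The sign-lexicographic order. -/
def slex {ι : Type*} [LT ι] (x y : ι → ℤ) : Prop :=
  lexLt (fun i => |x i|) (fun i => |y i|) ∨ ((∀ i, |x i| = |y i|) ∧ lexLt y x)

/-- The display vector `(p₁,…,p_l; v₁,…,v_l)` of a presentation, used for the
sign-lexicographic comparison of presentations. -/
def presVec (d l : ℕ) (p : ℕ → ℕ) (v : ℕ → Fin d → ℤ) :
    Lex (Fin l ⊕ Lex (Fin l × Fin d)) → ℤ :=
  fun i => Sum.elim (fun a : Fin l => (p a.1 : ℤ))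
    (fun b : Lex (Fin l × Fin d) => v (ofLex b).1.1 (ofLex b).2) (ofLex i)

/-- `(p, v)` is a presentation of `A ⊆ ℤ^d` by `l` independent equations
`(vᵢ, x) = pᵢ` with `vᵢ ∈ B_N`. -/
def IsPresOf (d l : ℕ) (κ N : ℝ) (A : Set (Fin d → ℤ))
    (p : ℕ → ℕ) (v : ℕ → Fin d → ℤ) : Prop :=
  (∀ i < l, inBall d κ N (v i)) ∧
  LinearIndependent ℝ (fun i : Fin l => fun j => ((v i.1 j : ℝ))) ∧
  A = {x | ∀ i < l, dotZ (v i) x = (p i : ℤ)}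

/-- `(p, v)` is the `N`-optimal presentation of `A`: minimal in the
sign-lexicographic order among all presentations. -/
def IsOptPres (d l : ℕ) (κ N : ℝ) (A : Set (Fin d → ℤ))
    (p : ℕ → ℕ) (v : ℕ → Fin d → ℤ) : Prop :=
  IsPresOf d l κ N A p v ∧
  ∀ q w, IsPresOf d l κ N A q w →
    presVec d l p v = presVec d l q w ∨ slex (presVec d l p v) (presVec d l q w)

/-- A presentation (indexed 1-based via `p (i-1)`, so `p_ℓ = p (ℓ - 1)`) has a cut at
`ℓ` for the parameters `(N, θ, μ, τ)`: `p_ℓ < μ N^τ` and `p_{ℓ+1} > θ N^{4dτ}`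
(with the conventions `p₀ = 0`, `p_{d+1} = ∞`). -/
def HasCutAt (d : ℕ) (N θ μ τ : ℝ) (p : ℕ → ℕ) (ℓ : ℕ) : Prop :=
  ℓ ≤ d ∧ (ℓ = 0 ∨ ((p (ℓ - 1) : ℝ)) < μ * N ^ τ) ∧
    (ℓ = d ∨ θ * N ^ (4 * (d : ℝ) * τ) < (p ℓ : ℝ))

/-- The parameters `(N, θ, μ, τ)` are allowable, together with the defining relations
among the fixed constants `τ₀, τ₁, c, C, N₀` of the paper. -/
def Allowable (d n : ℕ) (κ τ0 τ1 cc CC N0 N θ μ τ : ℝ) : Prop :=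
  max ((d : ℝ) ^ 2 + n) 12 < τ0 ∧
  τ1 = (4 * (d : ℝ)) ^ (d + 1) * (τ0 + 1) ∧
  0 < cc ∧ cc ≤ 1 / 2 ∧ 4 ≤ CC ∧
  N0 = (Nat.factorial (d + 1) : ℝ) * κ ^ (d + 1) * CC / cc ∧
  1 ≤ κ ∧ τ0 ≤ τ ∧ τ ≤ τ1 / (4 * d) ∧
  cc < θ ∧ θ < CC ∧ cc < μ ∧ μ < CC ∧ N0 < N

/-!
Suppose no `ℓ` works. If `v ∈ B_N` lies outside `⟨v₁, …, v_ℓ⟩` and `|(v, m)| < p_{ℓ+1}`, then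
exchanging `v` into position `ℓ + 1` gives a presentation of `m` that is smaller in the
sign-lexicographic order; so failure at `ℓ` forces `p_{ℓ+1} < C max(N^{4dτ₀}, c^{-4d} p_ℓ^{4d})`.
Inductively `p_j ≤ C N^{e_j}` with exponents `e_j < τ₁/(4d)` for all `j ≤ d`, Cramer's rule
bounds `|m|` by a power of `N` far below `N^{τ₁}`, and `|m - r(m)| ≤ dκ` contradicts
`|r(m)| > C N^{τ₁}`.
-/

open Matrix

section EuclideanNorm

variable {d : ℕ}

lemma pos_of_enormZ_pos {v : Fin d → ℤ} (h : 0 < enormZ v) : 0 < d := by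
  rcases d.eq_zero_or_pos with rfl | hd
  · simp [enormZ] at h
  · exact hd

lemma enormZ_eq_norm (v : Fin d → ℤ) :
    enormZ v = ‖WithLp.toLp 2 (fun i => (v i : ℝ))‖ := by
  simp [enormZ, EuclideanSpace.norm_eq]

lemma abs_le_enormZ (v : Fin d → ℤ) (i : Fin d) : |(v i : ℝ)| ≤ enormZ v := by
  simpa [enormZ_eq_norm] using PiLp.norm_apply_le (WithLp.toLp 2 fun i => (v i : ℝ)) i

lemma enormZ_le_enormZ_add_enormZ_sub (x y : Fin d → ℤ) :
    enormZ y ≤ enormZ x + enormZ (x - y) := by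
  simp only [enormZ_eq_norm]
  convert norm_le_norm_add_norm_sub (WithLp.toLp 2 fun i => (x i : ℝ))
    (WithLp.toLp 2 fun i => (y i : ℝ)) using 2
  rw [← WithLp.toLp_sub]
  congr 1
  ext i
  simp

lemma enormZ_le_sqrt_mul {v : Fin d → ℤ} {B : ℝ} (hB0 : 0 ≤ B) (hB : ∀ i, |(v i : ℝ)| ≤ B) :
    enormZ v ≤ √d * B := by
  rw [enormZ, ← Real.sqrt_sq hB0, ← Real.sqrt_mul (Nat.cast_nonneg d)]
  gcongr
  calc ∑ i, (v i : ℝ) ^ 2 ≤ ∑ _i : Fin d, B ^ 2 := by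
        refine Finset.sum_le_sum fun i _ => ?_
        exact sq_le_sq' (abs_le.mp (hB i)).1 (abs_le.mp (hB i)).2
    _ = d * B ^ 2 := by simp

end EuclideanNorm

section RowMatrix

variable {d : ℕ}

def rowMatrix (v : ℕ → Fin d → ℤ) : Matrix (Fin d) (Fin d) ℝ :=
  Matrix.of fun i j => (v i j : ℝ)

lemma rowMatrix_mulVec (v : ℕ → Fin d → ℤ) (x : Fin d → ℤ) :
    rowMatrix v *ᵥ (fun j => (x j : ℝ)) = fun i : Fin d => ((dotZ (v i) x : ℤ) : ℝ) := by
  ext i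
  simp [rowMatrix, Matrix.mulVec, dotProduct, dotZ]

variable {v : ℕ → Fin d → ℤ}

lemma isUnit_rowMatrix (hv : LinearIndependent ℝ fun i : Fin d => fun j => (v i j : ℝ)) :
    IsUnit (rowMatrix v) :=
  Matrix.linearIndependent_rows_iff_isUnit.mp hv

lemma one_le_abs_det_rowMatrix (hv : LinearIndependent ℝ fun i : Fin d => fun j => (v i j : ℝ)) :
    1 ≤ |(rowMatrix v).det| := by
  have hdet : (rowMatrix v).det = ((Matrix.of fun (i j : Fin d) => v i j).det : ℝ) := by
    rw [Int.cast_det]; rfl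
  have hne : (Matrix.of fun (i j : Fin d) => v i j).det ≠ 0 := by
    intro h
    simpa [hdet, h] using (Matrix.isUnit_iff_isUnit_det _).mp (isUnit_rowMatrix hv)
  rw [hdet, ← Int.cast_abs]
  exact_mod_cast Int.one_le_abs hne

lemma eq_of_forall_dotZ_eq (hv : LinearIndependent ℝ fun i : Fin d => fun j => (v i j : ℝ))
    {x y : Fin d → ℤ} (hxy : ∀ i < d, dotZ (v i) x = dotZ (v i) y) : x = y := by
  have h := Matrix.mulVec_injective_iff_isUnit.mpr (isUnit_rowMatrix hv)
    (a₁ := fun j => (x j : ℝ)) (a₂ := fun j => (y j : ℝ))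
  simp only [rowMatrix_mulVec] at h
  ext j
  exact_mod_cast congrFun (h (funext fun i => by rw [hxy i i.2])) j

end RowMatrix

/-- Cramer's rule `det A • x = adj A *ᵥ (A *ᵥ x)`, where the adjugate entries are
determinants of matrices with entries of size `≤ R`. -/
lemma Matrix.abs_le_of_abs_mulVec_le {n : Type*} [Fintype n] [DecidableEq n]
    {A : Matrix n n ℝ} {R P : ℝ} (hdet : 1 ≤ |A.det|) (hR : 1 ≤ R) (hA : ∀ i j, |A i j| ≤ R)
    {x : n → ℝ} (hx : ∀ i, |(A *ᵥ x) i| ≤ P) (j : n) :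
    |x j| ≤ Fintype.card n * (Fintype.card n).factorial * R ^ Fintype.card n * P := by
  have hadj : ∀ i, |A.adjugate j i| ≤ (Fintype.card n).factorial * R ^ Fintype.card n := by
    intro i
    rw [Matrix.adjugate_apply]
    refine (Matrix.det_le (abv := AbsoluteValue.abs) fun i' j' => ?_).trans_eq (nsmul_eq_mul _ _)
    rcases eq_or_ne i' i with rfl | hi'
    · rw [Matrix.updateRow_self, Pi.single_apply]
      split_ifs <;> simp [hR, zero_le_one.trans hR]
    · rw [Matrix.updateRow_ne hi']
      exact hA i' j'
  have hcramer : A.det * x j = ∑ i, A.adjugate j i * (A *ᵥ x) i := by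
    change _ = (A.adjugate *ᵥ (A *ᵥ x)) j
    rw [mulVec_mulVec, adjugate_mul, smul_mulVec, one_mulVec]
    rfl
  calc |x j| ≤ |A.det| * |x j| := le_mul_of_one_le_left (abs_nonneg _) hdet
    _ = |∑ i, A.adjugate j i * (A *ᵥ x) i| := by rw [← abs_mul, hcramer]
    _ ≤ ∑ i, |A.adjugate j i| * |(A *ᵥ x) i| := by
      simpa only [abs_mul] using Finset.abs_sum_le_sum_abs (fun i => A.adjugate j i * (A *ᵥ x) i) _
    _ ≤ ∑ _i : n, (Fintype.card n).factorial * R ^ Fintype.card n * P := by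
      gcongr with i
      · exact hadj i
      · exact hx i
    _ = _ := by
      simp only [Finset.sum_const, Finset.card_univ, nsmul_eq_mul]
      ring

section Presentations

variable {d l : ℕ} {κ N : ℝ} {A : Set (Fin d → ℤ)} {p q : ℕ → ℕ} {v w : ℕ → Fin d → ℤ}

lemma IsPresOf.dotZ_eq {m : Fin d → ℤ} (h : IsPresOf d l κ N {m} p v) {i : ℕ} (hi : i < l) :
    dotZ (v i) m = p i := by
  have hm : m ∈ ({m} : Set (Fin d → ℤ)) := rfl
  rw [h.2.2] at hm
  exact hm i hi

lemma inBall.neg {u : Fin d → ℤ} (h : inBall d κ N u) : inBall d κ N (-u) :=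
  ⟨neg_ne_zero.mpr h.1, by simpa [enormZ] using h.2⟩

/-- The `p`-entries come first in `presVec`, so they decide the lexicographic comparison. -/
lemma IsOptPres.le_of_eqOn (hopt : IsOptPres d l κ N A p v) (hq : IsPresOf d l κ N A q w)
    {k : ℕ} (hk : k < l) (hpq : ∀ i < k, q i = p i) : p k ≤ q k := by
  by_contra! hlt
  set K : Lex (Fin l ⊕ Lex (Fin l × Fin d)) := toLex (Sum.inl ⟨k, hk⟩)
  have hK : |presVec d l q w K| < |presVec d l p v K| := by
    simp only [K, presVec, ofLex_toLex, Sum.elim_inl, Nat.abs_cast]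
    exact_mod_cast hlt
  have hagree : ∀ I < K, presVec d l p v I = presVec d l q w I := by
    intro I hI
    rcases I with i | b
    · have hik : i < (⟨k, hk⟩ : Fin l) := Sum.Lex.inl_lt_inl_iff.mp hI
      change (p i : ℤ) = q i
      rw [hpq i hik]
    · exact absurd hI Sum.Lex.not_inr_lt_inl
  rcases hopt.2 q w hq with heq | ⟨I, hI, hlt'⟩ | ⟨hall, -⟩
  · exact hK.ne (by rw [heq])
  · rcases lt_trichotomy I K with h | rfl | h
    · simp [hagree I h] at hlt'
    · exact lt_asymm hK hlt'
    · exact hK.ne (hI K h).symm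
  · exact hK.ne (hall K).symm

lemma isPresOf_singleton (hball : ∀ i < d, inBall d κ N (v i))
    (hv : LinearIndependent ℝ fun i : Fin d => fun j => (v i j : ℝ)) (m : Fin d → ℤ) :
    IsPresOf d d κ N {m} (fun i => (dotZ (v i) m).natAbs)
      (fun i => if 0 ≤ dotZ (v i) m then v i else -v i) := by
  have hdot : ∀ i, dotZ (if 0 ≤ dotZ (v i) m then v i else -v i) m = (dotZ (v i) m).natAbs := by
    intro i
    split_ifs with h
    · exact (Int.natAbs_of_nonneg h).symm
    · have hneg : dotZ (-v i) m = -dotZ (v i) m := by simp [dotZ]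
      rw [hneg, Int.natCast_natAbs, abs_of_neg (not_le.mp h)]
  have hLI : LinearIndependent ℝ fun i : Fin d => fun j =>
      ((if 0 ≤ dotZ (v i) m then v i else -v i) j : ℝ) := by
    convert hv.units_smul fun i : Fin d => if 0 ≤ dotZ (v i) m then (1 : ℝˣ) else -1 using 1
    ext i j
    by_cases h : 0 ≤ dotZ (v i) m <;> simp [h]
  refine ⟨fun i hi => ?_, hLI, ?_⟩
  · dsimp only
    split_ifs
    exacts [hball i hi, (hball i hi).neg]
  · ext x
    constructor
    · rintro rfl i -
      exact hdot i
    · intro hx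
      exact eq_of_forall_dotZ_eq (v := fun i => if 0 ≤ dotZ (v i) m then v i else -v i) hLI fun i hi => (hx i hi).trans (hdot i).symm

end Presentations

lemma Module.Basis.exists_linearIndependent_update {ι K V : Type*} [DecidableEq ι] [Field K]
    [AddCommGroup V] [Module K V] (b : Module.Basis ι K V) {s : Set ι} {u : V}
    (hu : u ∉ Submodule.span K (b '' s)) :
    ∃ j ∉ s, LinearIndependent K (Function.update b j u) := by
  contrapose! hu
  rw [b.mem_span_image]
  intro j hj
  by_contra hjs
  refine hu j hjs (b.linearIndependent.update j u ⟨1, one_mem _, b.repr u, ?_, ?_⟩)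
  · exact mem_nonZeroDivisors_of_ne_zero (Finsupp.mem_support_iff.mp hj)
  · simp [b.linearCombination_repr]

/-- Steinitz exchange: `u` replaces some `v j` with `j ≥ k`, and the swap moves it to position
`k` without disturbing the first `k` vectors. -/
lemma exists_linearIndependent_exchange {d k : ℕ} {v : ℕ → Fin d → ℤ} {u : Fin d → ℤ}
    (hv : LinearIndependent ℝ fun i : Fin d => fun j => (v i j : ℝ)) (hk : k < d)
    (hu : (fun j => (u j : ℝ)) ∉
      Submodule.span ℝ (Set.range fun i : Fin k => fun j => (v i j : ℝ))) :
    ∃ j, k ≤ j ∧ j < d ∧ LinearIndependent ℝ fun i : Fin d => fun l =>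
      (Function.update v j u (Equiv.swap k j i) l : ℝ) := by
  have : NeZero d := ⟨by omega⟩
  let b := basisOfLinearIndependentOfCardEqFinrank hv (by simp)
  have hb : ⇑b = fun i : Fin d => fun j => (v i j : ℝ) :=
    coe_basisOfLinearIndependentOfCardEqFinrank hv _
  have himage : ⇑b '' {i | i.1 < k} = Set.range fun i : Fin k => fun j => (v i j : ℝ) := by
    ext x
    constructor
    · rintro ⟨i, hi, rfl⟩
      exact ⟨⟨i, hi⟩, by simp [hb]⟩
    · rintro ⟨i, rfl⟩
      exact ⟨⟨i, i.2.trans hk⟩, i.2, by simp [hb]⟩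
  obtain ⟨j, hjk, hj⟩ := b.exists_linearIndependent_update (himage ▸ hu)
  refine ⟨j, not_lt.mp hjk, j.2, ?_⟩
  have hfam : (fun i : Fin d => fun l => (Function.update v j u (Equiv.swap k j i) l : ℝ)) =
      Function.update b j (fun l => (u l : ℝ)) ∘ Equiv.swap ⟨k, hk⟩ j := by
    ext i l
    rw [Function.comp_apply, show Equiv.swap k j.1 i.1 = Equiv.swap ⟨k, hk⟩ j i from
      Fin.val_injective.swap_apply (⟨k, hk⟩ : Fin d) j i]
    generalize Equiv.swap ⟨k, hk⟩ j i = i'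
    rcases eq_or_ne i' j with rfl | h
    · simp
    · simp [Function.update_of_ne h, Function.update_of_ne (Fin.val_injective.ne h), hb]
  rw [hfam]
  exact hj.comp _ (Equiv.injective _)

/-- Otherwise exchanging `u` into position `k` would give a smaller presentation. -/
lemma IsOptPres.le_abs_dotZ {d : ℕ} {κ N : ℝ} {m : Fin d → ℤ} {p : ℕ → ℕ}
    {v : ℕ → Fin d → ℤ} (hopt : IsOptPres d d κ N {m} p v) {k : ℕ} (hk : k < d)
    {u : Fin d → ℤ} (hu : inBall d κ N u)
    (hspan : (fun j => (u j : ℝ)) ∉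
      Submodule.span ℝ (Set.range fun i : Fin k => fun j => (v i j : ℝ))) :
    (p k : ℤ) ≤ |dotZ u m| := by
  obtain ⟨j, hkj, hjd, hLI⟩ := exists_linearIndependent_exchange hopt.1.2.1 hk hspan
  set w : ℕ → Fin d → ℤ := fun i => Function.update v j u (Equiv.swap k j i)
  have hball : ∀ i < d, inBall d κ N (w i) := by
    intro i hi
    have hswap : Equiv.swap k j i < d := by
      rw [Equiv.swap_apply_def]
      split_ifs <;> omega
    rcases eq_or_ne (Equiv.swap k j i) j with h | h
    · simpa [w, h] using hu
    · simpa [w, Function.update_of_ne h] using hopt.1.1 _ hswap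
  have hlow : ∀ i < k, w i = v i := fun i hi => by
    simp [w, Equiv.swap_apply_of_ne_of_ne (by omega : i ≠ k) (by omega : i ≠ j),
      Function.update_of_ne (by omega : i ≠ j)]
  have hle : p k ≤ (dotZ (w k) m).natAbs :=
    hopt.le_of_eqOn (isPresOf_singleton hball hLI m) hk fun i hi => by
      simp only [hlow i hi, hopt.1.dotZ_eq (hi.trans hk), Int.natAbs_natCast]
  have hwk : w k = u := by simp [w]
  rw [hwk] at hle
  exact (Nat.cast_le.mpr hle).trans_eq (Int.natCast_natAbs _)

lemma IsPresOf.enormZ_le {d : ℕ} {κ N P : ℝ} {m : Fin d → ℤ} {p : ℕ → ℕ} {v : ℕ → Fin d → ℤ}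
    (h : IsPresOf d d κ N {m} p v) (hκN : 1 ≤ κ * N) (hP : ∀ i < d, (p i : ℝ) ≤ P) :
    enormZ m ≤ √d * (d * d.factorial * (κ * N) ^ d * P) := by
  have hB : 0 ≤ d * d.factorial * (κ * N) ^ d * P := by
    rcases d.eq_zero_or_pos with rfl | hd
    · simp
    · have := (Nat.cast_nonneg _).trans (hP 0 hd)
      positivity
  refine enormZ_le_sqrt_mul hB fun j => ?_
  simpa using Matrix.abs_le_of_abs_mulVec_le (x := fun j => (m j : ℝ)) (P := P)
    (one_le_abs_det_rowMatrix h.2.1) hκN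
    (fun i j => (abs_le_enormZ (v i) j).trans (h.1 i i.2).2.le)
    (fun i => by simpa [rowMatrix_mulVec, h.dotZ_eq i.2] using hP i i.2) j

/-- The exponents in the bounds `p_j ≤ C N^{e_j}`: `e₀ = 4dτ₀`, and `4d(e_j + 1) ≤ e_{j+1}`
absorbs the passage from `p_j` to `c^{-4d} p_j^{4d}`. -/
def growthExp (d : ℕ) (τ₀ : ℝ) (j : ℕ) : ℝ := (4 * d) ^ (j + 1) * (τ₀ + 1) - 4 * d

section GrowthExp

variable {d : ℕ} {τ₀ : ℝ}

lemma growthExp_zero : growthExp d τ₀ 0 = 4 * d * τ₀ := by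
  simp only [growthExp]
  ring

lemma growthExp_succ_ge (j : ℕ) :
    4 * d + 4 * d * growthExp d τ₀ j ≤ growthExp d τ₀ (j + 1) := by
  have hd : (8 * d : ℝ) ≤ 16 * d ^ 2 := by
    exact_mod_cast (by nlinarith [Nat.le_mul_self d] : 8 * d ≤ 16 * d ^ 2)
  simp only [growthExp, pow_succ _ (j + 1)]
  nlinarith

variable (hd : 0 < d) (hτ₀ : -1 ≤ τ₀)
include hd hτ₀

lemma growthExp_zero_le (j : ℕ) : 4 * d * τ₀ ≤ growthExp d τ₀ j := by
  have h4d : (1 : ℝ) ≤ 4 * d := by norm_cast; omega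
  rw [← growthExp_zero]
  simp only [growthExp]
  gcongr
  · linarith
  · omega

lemma growthExp_add_one_le {j : ℕ} (hj : j < d) :
    growthExp d τ₀ j + 1 ≤ (4 * d) ^ d * (τ₀ + 1) := by
  have h4d : (1 : ℝ) ≤ 4 * d := by norm_cast; omega
  have : (4 * d : ℝ) ^ (j + 1) * (τ₀ + 1) ≤ (4 * d) ^ d * (τ₀ + 1) := by
    gcongr
    · linarith
    · omega
  simp only [growthExp]
  linarith

end GrowthExp

lemma div_le_and_factorial_mul_pow_le {d : ℕ} {κ c C N : ℝ} (hκ : 1 ≤ κ) (hc : 0 < c)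
    (hcC : c ≤ C) (hN : (d + 1).factorial * κ ^ (d + 1) * C / c < N) :
    C / c ≤ N ∧ (d + 1).factorial * κ ^ (d + 1) ≤ N := by
  have hF : 1 ≤ ((d + 1).factorial : ℝ) * κ ^ (d + 1) :=
    one_le_mul_of_one_le_of_one_le (by exact_mod_cast (d + 1).factorial_pos) (one_le_pow₀ hκ)
  have hCc : 1 ≤ C / c := (one_le_div hc).mpr hcC
  rw [mul_div_assoc] at hN
  constructor <;> nlinarith

section RpowBounds

variable {c C N : ℝ} (hc : 0 < c) (hN : 1 ≤ N) (hCN : C / c ≤ N)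
include hc hN hCN

lemma mul_max_le_mul_rpow {k : ℕ} {a x e e' : ℝ} (hC : 0 ≤ C) (ha : a ≤ e')
    (he : k + k * e ≤ e') (hx0 : 0 ≤ x) (hx : x ≤ C * N ^ e) :
    C * max (N ^ a) (c ^ (-(k : ℝ)) * x ^ k) ≤ C * N ^ e' := by
  have hN0 : 0 ≤ N := zero_le_one.trans hN
  refine mul_le_mul_of_nonneg_left (max_le (Real.rpow_le_rpow_of_exponent_le hN ha) ?_) hC
  calc c ^ (-(k : ℝ)) * x ^ k ≤ c ^ (-(k : ℝ)) * (C * N ^ e) ^ k := by gcongr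
    _ = (C / c) ^ k * N ^ (k * e) := by
      rw [Real.rpow_neg hc.le, Real.rpow_natCast, mul_pow, div_pow, mul_comm (k : ℝ),
        Real.rpow_mul hN0, Real.rpow_natCast]
      ring
    _ ≤ N ^ k * N ^ (k * e) := by gcongr
    _ = N ^ (k + k * e) := by rw [Real.rpow_add (by linarith), Real.rpow_natCast]
    _ ≤ N ^ e' := Real.rpow_le_rpow_of_exponent_le hN he

lemma mul_rpow_le_mul_rpow {e σ : ℝ} (he : e + 1 ≤ σ) : C * N ^ e ≤ c * N ^ σ :=
  calc C * N ^ e ≤ (c * N) * N ^ e := by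
        gcongr
        exact (div_le_iff₀ hc).mp hCN |>.trans_eq (mul_comm _ _)
    _ = c * N ^ (e + 1) := by rw [Real.rpow_add (by linarith), Real.rpow_one]; ring
    _ ≤ c * N ^ σ := by gcongr

end RpowBounds

lemma sqrt_mul_add_le_mul_rpow {d : ℕ} {κ c C N σ : ℝ} (hd : 0 < d) (hκ : 1 ≤ κ)
    (hc0 : 0 ≤ c) (hc : c ≤ 1) (hC : 2 ≤ C) (hN : (d + 1).factorial * κ ^ (d + 1) ≤ N)
    (hσ : 1 ≤ σ) :
    √d * (d * d.factorial * (κ * N) ^ d * (c * N ^ σ)) + d * κ ≤ C * N ^ (4 * d * σ) := by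
  have hd1 : (1 : ℝ) ≤ d := by exact_mod_cast hd
  have hfac : (d : ℝ) * d.factorial * κ ^ d ≤ N := by
    refine le_trans ?_ hN
    rw [Nat.factorial_succ, Nat.cast_mul, pow_succ]
    have hX : (0 : ℝ) ≤ d.factorial * κ ^ d := by positivity
    push_cast
    nlinarith [mul_nonneg hX (sub_nonneg.mpr hκ)]
  have hdκ : d * κ ≤ N := by
    refine le_trans ?_ hfac
    have h1 : (1 : ℝ) ≤ d.factorial := by exact_mod_cast d.factorial_pos
    have h2 : κ ≤ d.factorial * κ ^ d :=
      (le_self_pow₀ hκ hd.ne').trans (le_mul_of_one_le_left (by positivity) h1)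
    rw [mul_assoc]
    exact mul_le_mul_of_nonneg_left h2 (Nat.cast_nonneg d)
  have hN1 : 1 ≤ N := hd1.trans (by nlinarith)
  have hsqrt : √d ≤ N := (Real.sqrt_le_self_iff.mpr (Or.inr hd1)).trans (by nlinarith)
  have hexp : (d : ℝ) + 2 + σ ≤ 4 * d * σ := by nlinarith
  have hN0 : 0 < N := by linarith
  calc √d * (d * d.factorial * (κ * N) ^ d * (c * N ^ σ)) + d * κ
      = √d * (d * d.factorial * κ ^ d) * c * N ^ d * N ^ σ + d * κ := by ring
    _ ≤ N * N * 1 * N ^ d * N ^ σ + N := by gcongr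
    _ = N ^ ((d : ℝ) + 2 + σ) + N := by
      rw [Real.rpow_add hN0, Real.rpow_add hN0, Real.rpow_natCast, Real.rpow_two]
      ring
    _ ≤ N ^ (4 * d * σ) + N ^ (4 * d * σ) := by
      exact add_le_add (Real.rpow_le_rpow_of_exponent_le hN1 hexp)
        (Real.self_le_rpow_of_one_le hN1 (by nlinarith))
    _ ≤ C * N ^ (4 * d * σ) := by
      have : 0 ≤ N ^ (4 * d * σ) := by positivity
      nlinarith

/-- `m ∈ [v; p]_ℓ^g`, for the `N`-good subspace `[v; p]_ℓ` (`p_ℓ = p (ℓ - 1)` and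
`σ = τ₁/(4d)`). -/
def MemGoodPortion (d : ℕ) (κ N τ0 σ c C : ℝ) (p : ℕ → ℕ) (v : ℕ → Fin d → ℤ)
    (m : Fin d → ℤ) (ℓ : ℕ) : Prop :=
  (p (ℓ - 1) : ℝ) ≤ c * N ^ σ ∧
    ∀ u : Fin d → ℤ, inBall d κ N u →
      (fun j => (u j : ℝ)) ∉ Submodule.span ℝ (Set.range fun i : Fin ℓ => fun j => (v i j : ℝ)) →
      C * max (N ^ (4 * (d : ℝ) * τ0)) (c ^ (-(4 * (d : ℝ))) * (p (ℓ - 1) : ℝ) ^ (4 * d)) ≤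
        |(dotZ u m : ℝ)|

lemma IsOptPres.le_mul_rpow_growthExp {d : ℕ} {κ N τ0 σ c C : ℝ} {m : Fin d → ℤ}
    {p : ℕ → ℕ} {v : ℕ → Fin d → ℤ} (hopt : IsOptPres d d κ N {m} p v) (hd : 0 < d)
    (hτ0 : -1 ≤ τ0) (hc : 0 < c) (hC : 0 ≤ C) (hN : 1 ≤ N) (hCN : C / c ≤ N)
    (hσ : ∀ j < d, C * N ^ growthExp d τ0 j ≤ c * N ^ σ)
    (hp0 : (p 0 : ℝ) ≤ C * N ^ (4 * (d : ℝ) * τ0))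
    (hbad : ∀ ℓ, 0 < ℓ → ℓ < d → ¬ MemGoodPortion d κ N τ0 σ c C p v m ℓ) :
    ∀ j < d, (p j : ℝ) ≤ C * N ^ growthExp d τ0 j := by
  intro j
  induction j with
  | zero => exact fun _ => by rwa [growthExp_zero]
  | succ j ih =>
    intro hj
    have hpj := ih (by omega)
    have hnot := hbad (j + 1) j.succ_pos hj
    simp only [MemGoodPortion, Nat.add_sub_cancel, not_and, not_forall, not_le] at hnot
    obtain ⟨u, hu, hspan, hlt⟩ := hnot (hpj.trans (hσ j (by omega)))
    have hstep := mul_max_le_mul_rpow (k := 4 * d) hc hN hCN hC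
      (growthExp_zero_le hd hτ0 (j + 1))
      (by push_cast; exact growthExp_succ_ge j) (Nat.cast_nonneg _) hpj
    push_cast at hstep
    calc (p (j + 1) : ℝ) ≤ |(dotZ u m : ℝ)| := by exact_mod_cast hopt.le_abs_dotZ hj hu hspan
      _ ≤ _ := hlt.le
      _ ≤ _ := hstep

theorem statement15_general (d n : ℕ) (κ τ0 τ1 cc CC N0 N : ℝ)
    (hτ0 : max ((d : ℝ) ^ 2 + n) 12 < τ0)
    (hτ1 : τ1 = (4 * (d : ℝ)) ^ (d + 1) * (τ0 + 1))
    (hcc0 : 0 < cc) (hcc : cc ≤ 1 / 2) (hCC : 4 ≤ CC)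
    (hN0 : N0 = (Nat.factorial (d + 1) : ℝ) * κ ^ (d + 1) * CC / cc)
    (hκ : 1 ≤ κ) (hN : N0 < N)
    (rt : (Fin d → ℤ) → (Fin d → ℤ))
    (hrt : ∀ x, enormZ (x - rt x) ≤ (d : ℝ) * κ)
    (m : Fin d → ℤ) (pm : ℕ → ℕ) (vm : ℕ → Fin d → ℤ)
    (hm : IsOptPres d d κ N {m} pm vm)
    (hroot : CC * N ^ τ1 < enormZ (rt m))
    (hp1 : (pm 0 : ℝ) < CC * N ^ (4 * (d : ℝ) * τ0)) :
    ∃ ℓ : ℕ, 0 < ℓ ∧ ℓ < d ∧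
      ((pm (ℓ - 1) : ℝ) ≤ cc * N ^ (τ1 / (4 * (d : ℝ)))) ∧
      ∀ v : Fin d → ℤ, inBall d κ N v →
        (fun j => ((v j : ℝ))) ∉
          Submodule.span ℝ (Set.range fun i : Fin ℓ => fun j => ((vm i.1 j : ℝ))) →
        CC * max (N ^ (4 * (d : ℝ) * τ0))
            (cc ^ (-(4 * (d : ℝ))) * ((pm (ℓ - 1) : ℝ)) ^ (4 * d))
          ≤ |((dotZ v m : ℤ) : ℝ)| := by
  obtain ⟨hCN, hFN⟩ := div_le_and_factorial_mul_pow_le hκ hcc0 (by linarith) (hN0 ▸ hN)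
  have hN1 : 1 ≤ N := ((one_le_div hcc0).mpr (by linarith)).trans hCN
  have hd : 0 < d := pos_of_enormZ_pos ((by positivity : 0 ≤ CC * N ^ τ1).trans_lt hroot)
  have hτ0' : 0 ≤ τ0 := by linarith [le_max_right ((d : ℝ) ^ 2 + n) 12]
  have hσ : τ1 / (4 * d) = (4 * d) ^ d * (τ0 + 1) := by
    rw [hτ1, pow_succ]
    field_simp
  have hpσ : ∀ j < d, CC * N ^ growthExp d τ0 j ≤ cc * N ^ (τ1 / (4 * d)) := fun j hj =>
    mul_rpow_le_mul_rpow hcc0 hN1 hCN (hσ ▸ growthExp_add_one_le hd (by linarith) hj)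
  suffices ∃ ℓ, 0 < ℓ ∧ ℓ < d ∧ MemGoodPortion d κ N τ0 (τ1 / (4 * d)) cc CC pm vm m ℓ from this
  by_contra! hbad
  have hp := hm.le_mul_rpow_growthExp hd (by linarith) hcc0 (by linarith) hN1 hCN hpσ hp1.le hbad
  have hmbound := hm.1.enormZ_le (one_le_mul_of_one_le_of_one_le hκ hN1)
    fun i hi => (hp i hi).trans (hpσ i hi)
  have hfinal := sqrt_mul_add_le_mul_rpow (C := CC) (σ := τ1 / (4 * d)) hd hκ hcc0.le
    (by linarith) (by linarith) hFN
    (by rw [hσ]; nlinarith [one_le_pow₀ (n := d) (by norm_cast; omega : (1 : ℝ) ≤ 4 * d)])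
  rw [mul_div_cancel₀ _ (by positivity)] at hfinal
  linarith [enormZ_le_enormZ_add_enormZ_sub m (rt m), hrt m]

/-- a point `m` with `|r(m)| > C N^{τ₁}` and `p₁ < C N^{4dτ₀}` in its
`N`-optimal presentation belongs to the good portion `[v;p]_ℓ^g` of the
codimension-`ℓ` subspace `[v;p]_ℓ` for some `0 < ℓ < d`: in particular
`p_ℓ ≤ c N^{τ₁/(4d)}` and `|(v, m)| ≥ C max(N^{4dτ₀}, c^{-4d} p_ℓ^{4d})` for all
`v ∈ B_N \ ⟨v₁,…,v_ℓ⟩`. -/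
theorem statement15 (d n : ℕ) (κ τ0 τ1 cc CC N0 N : ℝ)
    (hτ0 : max ((d : ℝ) ^ 2 + n) 12 < τ0)
    (hτ1 : τ1 = (4 * (d : ℝ)) ^ (d + 1) * (τ0 + 1))
    (hcc0 : 0 < cc) (hcc : cc ≤ 1 / 2) (hCC : 4 ≤ CC)
    (hN0 : N0 = (Nat.factorial (d + 1) : ℝ) * κ ^ (d + 1) * CC / cc)
    (hκ : 1 ≤ κ) (hN : N0 < N)
    (hcomp : CC * N ^ (4 * (d : ℝ) * τ0) ≤ cc * N ^ (τ1 / (4 * (d : ℝ))))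
    (rt : (Fin d → ℤ) → (Fin d → ℤ))
    (hrt : ∀ x, enormZ (x - rt x) ≤ (d : ℝ) * κ)
    (m : Fin d → ℤ) (pm : ℕ → ℕ) (vm : ℕ → Fin d → ℤ)
    (hm : IsOptPres d d κ N {m} pm vm)
    (hroot : CC * N ^ τ1 < enormZ (rt m))
    (hp1 : (pm 0 : ℝ) < CC * N ^ (4 * (d : ℝ) * τ0)) :
    ∃ ℓ : ℕ, 0 < ℓ ∧ ℓ < d ∧
      ((pm (ℓ - 1) : ℝ) ≤ cc * N ^ (τ1 / (4 * (d : ℝ)))) ∧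
      ∀ v : Fin d → ℤ, inBall d κ N v →
        (fun j => ((v j : ℝ))) ∉
          Submodule.span ℝ (Set.range fun i : Fin ℓ => fun j => ((vm i.1 j : ℝ))) →
        CC * max (N ^ (4 * (d : ℝ) * τ0))
            (cc ^ (-(4 * (d : ℝ))) * ((pm (ℓ - 1) : ℝ)) ^ (4 * d))
          ≤ |((dotZ v m : ℤ) : ℝ)| :=
  statement15_general d n κ τ0 τ1 cc CC N0 N hτ0 hτ1 hcc0 hcc hCC hN0 hκ hN rt hrt m pm vm hm hroot
    hp1
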